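/- arXiv:2508.17820 — 2 statements merged into one kernel-verified Lean document; each statement's English description precedes it below -/
import Mathlib

section
/- Let L be a positive integer and let ā, b̄, β, δ, c be real numbers with ā > 1, 0 ≤ b̄ < 1, β ≥ 0, δ ≥ 0, c ≥ 0. Let (q_k)_{k≥0} and (e_k)_{k≥0} be sequences of real numbers with q_0 = 0, e_0 = 0, satisfying for every k ≥ 1: q_k ≤ ā·q_{k−1} + c and e_k ≤ b̄·e_{k−1} + β·q_{k−1} + δ. Then e_L ≤ δ·(1 − b̄^L)/(1 − b̄) + β·c·(ā^L − b̄^L)/((ā − b̄)·(ā − 1)). (This is the closed-form solution (54) of the error recursion in Appendix E, the core inequality behind Theorem 1.) -/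
/-!
Unrolling both recursions turns them into geometric sums: `q k ≤ c (a ^ k - 1) / (a - 1)`, which
is at most `c a ^ k / (a - 1)`, and inserting this into the unrolled recursion for `e` leaves
`δ ∑ b ^ j + β c / (a - 1) ∑ b ^ j a ^ (L - 1 - j)`.
-/

open Finset

section

variable {R : Type*} [CommSemiring R] [PartialOrder R] [IsOrderedRing R]

theorem le_pow_mul_add_sum_of_le_mul_add {x f : ℕ → R} {r : R} (hr : 0 ≤ r)
    (hx : ∀ k, x (k + 1) ≤ r * x k + f k) (n : ℕ) :
    x n ≤ r ^ n * x 0 + ∑ j ∈ range n, r ^ j * f (n - 1 - j) := by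
  induction n with
  | zero => simp
  | succ n ih =>
    calc x (n + 1) ≤ r * x n + f n := hx n
      _ ≤ r * (r ^ n * x 0 + ∑ j ∈ range n, r ^ j * f (n - 1 - j)) + f n := by gcongr
      _ = r ^ (n + 1) * x 0 + ∑ j ∈ range (n + 1), r ^ j * f (n + 1 - 1 - j) := by
        rw [sum_range_succ', mul_add, mul_sum]
        simp only [pow_succ, Nat.add_sub_cancel, Nat.sub_sub, Nat.sub_zero, pow_zero, one_mul]
        ring_nf

end

theorem le_div_mul_pow_of_le_mul_add {q : ℕ → ℝ} {a c : ℝ} (ha : 1 < a) (hc : 0 ≤ c)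
    (hq0 : q 0 = 0) (hq : ∀ k, q (k + 1) ≤ a * q k + c) (n : ℕ) :
    q n ≤ c / (a - 1) * a ^ n := by
  have ha1 : 0 < a - 1 := sub_pos.2 ha
  calc q n ≤ ∑ j ∈ range n, a ^ j * c := by
        simpa [hq0] using le_pow_mul_add_sum_of_le_mul_add (by positivity) hq n
    _ = c / (a - 1) * (a ^ n - 1) := by
        rw [← sum_mul, geom_sum_eq ha.ne']; ring
    _ ≤ c / (a - 1) * a ^ n := by gcongr; linarith

theorem error_recursion_closed_form_general
    (L : ℕ)
    (a b β δ c : ℝ)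
    (ha : 1 < a) (hb0 : 0 ≤ b) (hb1 : b < 1) (hβ : 0 ≤ β) (hc : 0 ≤ c)
    (q e : ℕ → ℝ) (hq0 : q 0 = 0) (he0 : e 0 = 0)
    (hq : ∀ k : ℕ, q (k + 1) ≤ a * q k + c)
    (he : ∀ k : ℕ, e (k + 1) ≤ b * e k + β * q k + δ) :
    e L ≤ δ * (1 - b ^ L) / (1 - b) + β * c * (a ^ L - b ^ L) / ((a - b) * (a - 1)) := by
  have hab : b < a := hb1.trans ha
  have hβq (k : ℕ) : β * q k ≤ β * c / (a - 1) * a ^ k := by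
    rw [mul_div_assoc, mul_assoc]
    exact mul_le_mul_of_nonneg_left (le_div_mul_pow_of_le_mul_add ha hc hq0 hq k) hβ
  have he' := le_pow_mul_add_sum_of_le_mul_add (f := fun k => β * q k + δ) hb0
    (fun k => (he k).trans_eq (add_assoc _ _ _)) L
  rw [he0, mul_zero, zero_add] at he'
  calc e L ≤ ∑ j ∈ range L, b ^ j * (β * q (L - 1 - j) + δ) := he'
    _ ≤ ∑ j ∈ range L, b ^ j * (β * c / (a - 1) * a ^ (L - 1 - j) + δ) := by
        gcongr ∑ _ ∈ _, _ * (?_ + _) with j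
        exact hβq _
    _ = β * c / (a - 1) * ∑ j ∈ range L, a ^ j * b ^ (L - 1 - j) + δ * ∑ j ∈ range L, b ^ j := by
        rw [geom_sum₂_comm, mul_sum, mul_sum, ← sum_add_distrib]
        exact sum_congr rfl fun j _ => by ring
    _ = δ * (1 - b ^ L) / (1 - b) + β * c * (a ^ L - b ^ L) / ((a - b) * (a - 1)) := by
        have : a - b ≠ 0 := sub_ne_zero.2 hab.ne'
        have : a - 1 ≠ 0 := sub_ne_zero.2 ha.ne'
        have : 1 - b ≠ 0 := sub_ne_zero.2 hb1.ne'
        rw [geom₂_sum hab.ne', geom_sum_eq hb1.ne, ← neg_div_neg_eq (b ^ L - 1), neg_sub, neg_sub]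
        field_simp
        ring

/-- Closed-form solution (54) of the error recursion in Appendix E: if `q 0 = 0`,
`e 0 = 0`, `q (k+1) ≤ ā q k + c` and `e (k+1) ≤ b̄ e k + β q k + δ` for all `k`, with
`ā > 1`, `0 ≤ b̄ < 1`, `β, δ, c ≥ 0`, then
`e L ≤ δ (1 − b̄^L)/(1 − b̄) + β c (ā^L − b̄^L)/((ā − b̄)(ā − 1))`. -/
theorem error_recursion_closed_form
    (L : ℕ) (hL : 0 < L)
    (a b β δ c : ℝ)
    (ha : 1 < a) (hb0 : 0 ≤ b) (hb1 : b < 1) (hβ : 0 ≤ β) (hδ : 0 ≤ δ) (hc : 0 ≤ c)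
    (q e : ℕ → ℝ) (hq0 : q 0 = 0) (he0 : e 0 = 0)
    (hq : ∀ k : ℕ, q (k + 1) ≤ a * q k + c)
    (he : ∀ k : ℕ, e (k + 1) ≤ b * e k + β * q k + δ) :
    e L ≤ δ * (1 - b ^ L) / (1 - b) + β * c * (a ^ L - b ^ L) / ((a - b) * (a - 1)) :=
  error_recursion_closed_form_general L a b β δ c ha hb0 hb1 hβ hc q e hq0 he0 hq he
end

section
/- Let d and L be positive integers. Let C₁, ΔC₁ and M₁, …, M_L be d×d real matrices and c₂, Δc₂ ∈ ℝ^d vectors. Define vectors q_0 = e_0 = 0 ∈ ℝ^d and, for 1 ≤ k ≤ L, q_k = M_k·(C₁·q_{k−1} + c₂) and e_k = M_k·(C₁ + ΔC₁)·e_{k−1} + M_k·ΔC₁·q_{k−1} + M_k·Δc₂. Suppose there are real numbers m, p, t, d', c, s ≥ 0 with ‖M_k‖₂ ≤ m for all k, ‖C₁‖₂ ≤ p, ‖C₁ + ΔC₁‖₂ ≤ t, ‖ΔC₁‖₂ ≤ d', ‖c₂‖₂ ≤ c, ‖Δc₂‖₂ ≤ s, and suppose m·t < 1 < m·p. Then ‖e_L‖₂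 ≤ m·s·(1 − (m·t)^L)/(1 − m·t) + m²·d'·c·((m·p)^L − (m·t)^L)/((m·p − m·t)·(m·p − 1)). (This is a deterministic form of Theorem 1: the detection error of the L-block deep unfolded detector under perturbations ΔC₁ of the channel-dependent matrix and Δc₂ of the constant term.) -/
open Matrix
open scoped Matrix.Norms.L2Operator

/-!
Both the clean iterate `q_k` and the error `e_k` obey scalar linear recurrence inequalities:
`‖q_{k+1}‖ ≤ m p ‖q_k‖ + m c` and `‖e_{k+1}‖ ≤ m t ‖e_k‖ + m d' ‖q_k‖ + m s`.
Since the coefficients are nonnegative, any supersolution of such a recurrence that starts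
above the solution stays above it. The geometric sum
`m c ((m p)^k - 1)/(m p - 1)` solves the first recurrence exactly, and the claimed bound is a
supersolution of the second, with slack `m² d' c/(m p - 1)` at every step.
-/

/-- The Euclidean (ℓ²) norm of a real vector. -/
noncomputable def euclNorm {ι : Type*} [Fintype ι] (v : ι → ℝ) : ℝ :=
  ‖(EuclideanSpace.equiv ι ℝ).symm v‖

section EuclNorm

variable {ι κ : Type*} [Fintype ι] [Fintype κ]

lemma euclNorm_nonneg (v : ι → ℝ) : 0 ≤ euclNorm v := norm_nonneg _

@[simp]
lemma euclNorm_zero : euclNorm (0 : ι → ℝ) = 0 := by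
  simp [euclNorm]

lemma euclNorm_add_le (u v : ι → ℝ) : euclNorm (u + v) ≤ euclNorm u + euclNorm v :=
  norm_add_le ((EuclideanSpace.equiv ι ℝ).symm u) ((EuclideanSpace.equiv ι ℝ).symm v)

lemma euclNorm_mulVec_le [DecidableEq ι] (A : Matrix κ ι ℝ) (v : ι → ℝ) :
    euclNorm (A *ᵥ v) ≤ ‖A‖ * euclNorm v :=
  A.l2_opNorm_mulVec ((EuclideanSpace.equiv ι ℝ).symm v)

lemma euclNorm_mulVec_le_of_le [DecidableEq ι] {A : Matrix κ ι ℝ} {v : ι → ℝ} {α β : ℝ}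
    (hA : ‖A‖ ≤ α) (hv : euclNorm v ≤ β) : euclNorm (A *ᵥ v) ≤ α * β :=
  (euclNorm_mulVec_le A v).trans <|
    mul_le_mul hA hv (euclNorm_nonneg v) ((norm_nonneg A).trans hA)

end EuclNorm

section Blocks

variable {n : Type*} [Fintype n] [DecidableEq n]

lemma euclNorm_block_le {M C : Matrix n n ℝ} {c₂ x : n → ℝ} {m p c : ℝ}
    (hM : ‖M‖ ≤ m) (hC : ‖C‖ ≤ p) (hc₂ : euclNorm c₂ ≤ c) :
    euclNorm (M *ᵥ (C *ᵥ x + c₂)) ≤ m * p * euclNorm x + m * c := by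
  have hsum : euclNorm (C *ᵥ x + c₂) ≤ p * euclNorm x + c :=
    (euclNorm_add_le _ _).trans (add_le_add (euclNorm_mulVec_le_of_le hC le_rfl) hc₂)
  calc euclNorm (M *ᵥ (C *ᵥ x + c₂)) ≤ m * (p * euclNorm x + c) :=
        euclNorm_mulVec_le_of_le hM hsum
    _ = m * p * euclNorm x + m * c := by ring

lemma euclNorm_error_block_le {M A B : Matrix n n ℝ} {x y z : n → ℝ} {m t d' s : ℝ}
    (hM : ‖M‖ ≤ m) (hA : ‖A‖ ≤ t) (hB : ‖B‖ ≤ d') (hz : euclNorm z ≤ s) :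
    euclNorm ((M * A) *ᵥ x + (M * B) *ᵥ y + M *ᵥ z) ≤
      m * t * euclNorm x + (m * d' * euclNorm y + m * s) := by
  have hMAx := euclNorm_mulVec_le_of_le (norm_mul_le_of_le hM hA) (le_refl (euclNorm x))
  have hMBy := euclNorm_mulVec_le_of_le (norm_mul_le_of_le hM hB) (le_refl (euclNorm y))
  have hMz := euclNorm_mulVec_le_of_le hM hz
  have htri₁ := euclNorm_add_le ((M * A) *ᵥ x + (M * B) *ᵥ y) (M *ᵥ z)
  have htri₂ := euclNorm_add_le ((M * A) *ᵥ x) ((M * B) *ᵥ y)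
  linarith

end Blocks

theorem le_of_le_mul_add_of_mul_add_le {α : Type*} [Semiring α] [PartialOrder α]
    [IsOrderedRing α] {x X f : ℕ → α} {r : α} {n : ℕ} (hr : 0 ≤ r) (h0 : x 0 ≤ X 0)
    (hx : ∀ k < n, x (k + 1) ≤ r * x k + f k) (hX : ∀ k < n, r * X k + f k ≤ X (k + 1)) :
    ∀ k ≤ n, x k ≤ X k := by
  intro k
  induction k with
  | zero => exact fun _ => h0
  | succ k ih =>
    intro hk
    calc x (k + 1) ≤ r * x k + f k := hx k hk
      _ ≤ r * X k + f k := by gcongr; exact ih (Nat.le_of_succ_le hk)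
      _ ≤ X (k + 1) := hX k hk

lemma geom_closed_form_succ {a β : ℝ} (ha : a ≠ 1) (k : ℕ) :
    a * (β * (a ^ k - 1) / (a - 1)) + β = β * (a ^ (k + 1) - 1) / (a - 1) := by
  have : a - 1 ≠ 0 := sub_ne_zero.mpr ha
  field_simp
  ring

lemma error_closed_form_succ_ge {a b γ σ : ℝ} (hb : b < 1) (ha : 1 < a) (hγ : 0 ≤ γ)
    (k : ℕ) :
    b * (σ * (1 - b ^ k) / (1 - b) + γ * (a ^ k - b ^ k) / ((a - b) * (a - 1)))
        + (γ * (a ^ k - 1) / (a - 1) + σ) ≤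
      σ * (1 - b ^ (k + 1)) / (1 - b) + γ * (a ^ (k + 1) - b ^ (k + 1)) / ((a - b) * (a - 1)) := by
  have h1b : 1 - b ≠ 0 := by linarith
  have hab : a - b ≠ 0 := by linarith
  have ha1 : 0 < a - 1 := by linarith
  have hslack : σ * (1 - b ^ (k + 1)) / (1 - b)
        + γ * (a ^ (k + 1) - b ^ (k + 1)) / ((a - b) * (a - 1))
      - (b * (σ * (1 - b ^ k) / (1 - b) + γ * (a ^ k - b ^ k) / ((a - b) * (a - 1)))
        + (γ * (a ^ k - 1) / (a - 1) + σ)) = γ / (a - 1) := by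
    field_simp
    ring
  have : 0 ≤ γ / (a - 1) := div_nonneg hγ ha1.le
  linarith

theorem deep_unfolded_detection_error_general
    (d L : ℕ)
    (C₁ ΔC₁ : Matrix (Fin d) (Fin d) ℝ)
    (M : Fin L → Matrix (Fin d) (Fin d) ℝ)
    (c₂ Δc₂ : Fin d → ℝ)
    (q e : ℕ → Fin d → ℝ)
    (hq0 : q 0 = 0) (he0 : e 0 = 0)
    (hq : ∀ k : Fin L, q ((k : ℕ) + 1) = (M k).mulVec (C₁.mulVec (q (k : ℕ)) + c₂))
    (he : ∀ k : Fin L, e ((k : ℕ) + 1) =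
      (M k * (C₁ + ΔC₁)).mulVec (e (k : ℕ)) + (M k * ΔC₁).mulVec (q (k : ℕ))
        + (M k).mulVec Δc₂)
    (m p t d' c s : ℝ)
    (hm : 0 ≤ m)
    (hM : ∀ k : Fin L, ‖M k‖ ≤ m)
    (hC₁ : ‖C₁‖ ≤ p) (hCt : ‖C₁ + ΔC₁‖ ≤ t) (hΔC₁ : ‖ΔC₁‖ ≤ d')
    (hc₂ : euclNorm c₂ ≤ c) (hΔc₂ : euclNorm Δc₂ ≤ s)
    (hmt : m * t < 1) (hmp : 1 < m * p) :
    euclNorm (e L) ≤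
      m * s * (1 - (m * t) ^ L) / (1 - m * t) +
        m ^ 2 * d' * c * ((m * p) ^ L - (m * t) ^ L) / ((m * p - m * t) * (m * p - 1)) := by
  have ht : 0 ≤ t := (norm_nonneg _).trans hCt
  have hd' : 0 ≤ d' := (norm_nonneg _).trans hΔC₁
  have hc : 0 ≤ c := (euclNorm_nonneg _).trans hc₂
  have hq_le : ∀ k ≤ L, euclNorm (q k) ≤ m * c * ((m * p) ^ k - 1) / (m * p - 1) :=
    le_of_le_mul_add_of_mul_add_le (f := fun _ => m * c) (by linarith) (by simp [hq0])
      (fun k hk => hq ⟨k, hk⟩ ▸ euclNorm_block_le (hM ⟨k, hk⟩) hC₁ hc₂)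
      (fun k _ => (geom_closed_form_succ hmp.ne' k).le)
  refine le_of_le_mul_add_of_mul_add_le (x := fun k => euclNorm (e k))
    (X := fun k => m * s * (1 - (m * t) ^ k) / (1 - m * t) +
      m ^ 2 * d' * c * ((m * p) ^ k - (m * t) ^ k) / ((m * p - m * t) * (m * p - 1)))
    (f := fun k => m ^ 2 * d' * c * ((m * p) ^ k - 1) / (m * p - 1) + m * s)
    (mul_nonneg hm ht) (by simp [he0]) (fun k hk => ?_)
    (fun k _ => error_closed_form_succ_ge hmt hmp (by positivity) k) L le_rfl
  have hqk : m * d' * euclNorm (q k) ≤ m ^ 2 * d' * c * ((m * p) ^ k - 1) / (m * p - 1) := by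
    calc m * d' * euclNorm (q k) ≤ m * d' * (m * c * ((m * p) ^ k - 1) / (m * p - 1)) :=
          mul_le_mul_of_nonneg_left (hq_le k hk.le) (mul_nonneg hm hd')
      _ = _ := by ring
  have hstep := euclNorm_error_block_le (x := e k) (y := q k) (hM ⟨k, hk⟩) hCt hΔC₁ hΔc₂
  rw [he ⟨k, hk⟩]
  linarith

/-- Theorem 1 (deterministic form): detection error of the `L`-block deep unfolded
detector. With block maps `q_k = M_k (C₁ q_{k−1} + c₂)` and error recursion
`e_k = M_k (C₁+ΔC₁) e_{k−1} + M_k ΔC₁ q_{k−1} + M_k Δc₂`, under the stated norm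
bounds and `m t < 1 < m p`, the final error satisfies
`‖e_L‖₂ ≤ m s (1 − (m t)^L)/(1 − m t) + m² d' c ((m p)^L − (m t)^L)/((m p − m t)(m p − 1))`. -/
theorem deep_unfolded_detection_error
    (d L : ℕ) (hd : 0 < d) (hL : 0 < L)
    (C₁ ΔC₁ : Matrix (Fin d) (Fin d) ℝ)
    (M : Fin L → Matrix (Fin d) (Fin d) ℝ)
    (c₂ Δc₂ : Fin d → ℝ)
    (q e : ℕ → Fin d → ℝ)
    (hq0 : q 0 = 0) (he0 : e 0 = 0)
    (hq : ∀ k : Fin L, q ((k : ℕ) + 1) = (M k).mulVec (C₁.mulVec (q (k : ℕ)) + c₂))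
    (he : ∀ k : Fin L, e ((k : ℕ) + 1) =
      (M k * (C₁ + ΔC₁)).mulVec (e (k : ℕ)) + (M k * ΔC₁).mulVec (q (k : ℕ))
        + (M k).mulVec Δc₂)
    (m p t d' c s : ℝ)
    (hm : 0 ≤ m) (hp : 0 ≤ p) (ht : 0 ≤ t) (hd' : 0 ≤ d') (hc : 0 ≤ c) (hs : 0 ≤ s)
    (hM : ∀ k : Fin L, ‖M k‖ ≤ m)
    (hC₁ : ‖C₁‖ ≤ p) (hCt : ‖C₁ + ΔC₁‖ ≤ t) (hΔC₁ : ‖ΔC₁‖ ≤ d')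
    (hc₂ : euclNorm c₂ ≤ c) (hΔc₂ : euclNorm Δc₂ ≤ s)
    (hmt : m * t < 1) (hmp : 1 < m * p) :
    euclNorm (e L) ≤
      m * s * (1 - (m * t) ^ L) / (1 - m * t) +
        m ^ 2 * d' * c * ((m * p) ^ L - (m * t) ^ L) / ((m * p - m * t) * (m * p - 1)) :=
  deep_unfolded_detection_error_general d L C₁ ΔC₁ M c₂ Δc₂ q e hq0 he0 hq he m p t d' c s hm hM hC₁
    hCt hΔC₁ hc₂ hΔc₂ hmt hmp
end
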